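/- arXiv:1812.01482 — 3 statements merged into one kernel-verified Lean document; each statement's English description precedes it below -/
import Mathlib

section
/- Let G be a finite simple undirected graph with threshold function τ : V(G) → ℕ satisfying τ(v) ≥ 1 for every vertex v, and let t be the size of a minimum vertex cover of G. Then for every nonempty seed set S ⊆ V(G), the diffusion process starting from S terminates in at most 2t rounds; that is, A[S, 2t] = influence_G(S). -/
open scoped Classical

/-- The neighborhood of `u` in `G`, as a finset. -/
noncomputable def nbrs {V : Type*} [Fintype V] (G : SimpleGraph V) (u : V) : Finset V :=
  Finset.univ.filter (fun w => G.Adj u w)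

/-- The diffusion process: `diffusion G τ S i` is the set `A[S,i]` of vertices
active after `i` rounds starting from seed set `S`. -/
noncomputable def diffusion {V : Type*} [Fintype V] (G : SimpleGraph V) (τ : V → ℕ)
    (S : Finset V) : ℕ → Finset V
  | 0 => S
  | (i + 1) => diffusion G τ S i ∪
      Finset.univ.filter (fun u => τ u ≤ (nbrs G u ∩ diffusion G τ S i).card)

/-- The influence of a seed set `S`: all vertices eventually activated. -/
def influence {V : Type*} [Fintype V] (G : SimpleGraph V) (τ : V → ℕ) (S : Finset V) : Set V :=
  {v | ∃ i, v ∈ diffusion G τ S i}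

/-- `S` is a target set if its influence is the whole vertex set. -/
def isTargetSet {V : Type*} [Fintype V] (G : SimpleGraph V) (τ : V → ℕ) (S : Finset V) : Prop :=
  influence G τ S = Set.univ

/-- `C` is a vertex cover of `G`. -/
def isVertexCover {V : Type*} [Fintype V] (G : SimpleGraph V) (C : Finset V) : Prop :=
  ∀ u v, G.Adj u v → u ∈ C ∨ v ∈ C

/-!
Fix a vertex cover `C` of size `t`. A vertex outside `C` has all its neighbours in `C`, so once
no new vertex of `C` has become active for two consecutive rounds, nothing outside `C` can become
active either, and the process has stopped. Hence every two rounds of a running process activate a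
new vertex of `C`; since the first round already activates one (thresholds are positive, so a
newly activated vertex has an active neighbour, and one of the two lies in `C`), a process still
running at round `2t + 1` would have activated `t + 1` vertices of `C`.
-/

open Finset

section Diffusion

variable {V : Type*} [Fintype V] {G : SimpleGraph V} {τ : V → ℕ} {S C : Finset V}

lemma mem_diffusion_succ {i : ℕ} {u : V} :
    u ∈ diffusion G τ S (i + 1) ↔
      u ∈ diffusion G τ S i ∨ τ u ≤ #(nbrs G u ∩ diffusion G τ S i) := by
  simp [diffusion]

lemma diffusion_mono : Monotone (diffusion G τ S) :=
  monotone_nat_of_le_succ fun _ _ hu => mem_diffusion_succ.2 (Or.inl hu)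

lemma diffusion_eq_of_succ_eq {i j : ℕ} (hfix : diffusion G τ S (i + 1) = diffusion G τ S i)
    (hij : i ≤ j) : diffusion G τ S j = diffusion G τ S i := by
  induction j, hij using Nat.le_induction with
  | base => rfl
  | succ j _ ih => rw [diffusion, ih, ← diffusion, hfix]

lemma influence_eq_of_succ_eq {n : ℕ} (hfix : diffusion G τ S (n + 1) = diffusion G τ S n) :
    influence G τ S = ↑(diffusion G τ S n) := by
  ext v
  refine ⟨fun ⟨i, hi⟩ => ?_, fun hv => ⟨n, hv⟩⟩
  rcases le_total i n with hin | hni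
  · exact diffusion_mono hin hi
  · rwa [diffusion_eq_of_succ_eq hfix hni] at hi

lemma nbrs_subset_of_notMem (hC : isVertexCover G C) {u : V} (hu : u ∉ C) : nbrs G u ⊆ C :=
  fun w hw => (hC u w (mem_filter.1 hw).2).resolve_left hu

lemma exists_mem_diffusion_succ_notMem {i : ℕ}
    (hne : diffusion G τ S (i + 1) ≠ diffusion G τ S i) :
    ∃ u ∈ diffusion G τ S (i + 1), u ∉ diffusion G τ S i ∧
      τ u ≤ #(nbrs G u ∩ diffusion G τ S i) := by
  obtain ⟨u, hu, hu'⟩ := exists_of_ssubset ((diffusion_mono i.le_succ).ssubset_of_ne hne.symm)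
  exact ⟨u, hu, hu', (mem_diffusion_succ.1 hu).resolve_left hu'⟩

lemma inter_diffusion_one_nonempty (hτ : ∀ v, 1 ≤ τ v) (hC : isVertexCover G C)
    (hne : diffusion G τ S 1 ≠ diffusion G τ S 0) : (C ∩ diffusion G τ S 1).Nonempty := by
  obtain ⟨u, hu, -, hτu⟩ := exists_mem_diffusion_succ_notMem hne
  obtain ⟨v, hv⟩ := card_pos.1 ((hτ u).trans hτu)
  obtain ⟨hvu, hv0⟩ := mem_inter.1 hv
  rcases hC u v (mem_filter.1 hvu).2 with huC | hvC
  · exact ⟨u, mem_inter.2 ⟨huC, hu⟩⟩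
  · exact ⟨v, mem_inter.2 ⟨hvC, diffusion_mono zero_le_one hv0⟩⟩

lemma inter_diffusion_ssubset (hC : isVertexCover G C) {j : ℕ}
    (hne : diffusion G τ S (j + 2) ≠ diffusion G τ S (j + 1)) :
    C ∩ diffusion G τ S j ⊂ C ∩ diffusion G τ S (j + 2) := by
  refine (inter_subset_inter_left (diffusion_mono (by omega))).ssubset_of_ne fun heq => ?_
  obtain ⟨u, hu, hu', hτu⟩ := exists_mem_diffusion_succ_notMem hne
  have huC : u ∉ C := fun huC =>
    hu' (diffusion_mono j.le_succ (mem_inter.1 (heq ▸ mem_inter.2 ⟨huC, hu⟩)).2)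
  have hnbrs : nbrs G u ∩ diffusion G τ S (j + 1) ⊆ nbrs G u ∩ diffusion G τ S j := by
    intro w hw
    obtain ⟨hwu, hw⟩ := mem_inter.1 hw
    have hwC : w ∈ C ∩ diffusion G τ S (j + 2) :=
      mem_inter.2 ⟨nbrs_subset_of_notMem hC huC hwu, diffusion_mono (j + 1).le_succ hw⟩
    exact mem_inter.2 ⟨hwu, (mem_inter.1 (heq ▸ hwC)).2⟩
  exact hu' (mem_diffusion_succ.2 (Or.inr (hτu.trans (card_le_card hnbrs))))

lemma lt_card_inter_diffusion (hτ : ∀ v, 1 ≤ τ v) (hC : isVertexCover G C) {k : ℕ}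
    (hne : diffusion G τ S (2 * k + 1) ≠ diffusion G τ S (2 * k)) :
    k < #(C ∩ diffusion G τ S (2 * k + 1)) := by
  induction k with
  | zero => exact card_pos.2 (inter_diffusion_one_nonempty hτ hC hne)
  | succ k ih =>
    have hprev : diffusion G τ S (2 * k + 1) ≠ diffusion G τ S (2 * k) := fun hfix =>
      hne ((diffusion_eq_of_succ_eq hfix (by omega)).trans
        (diffusion_eq_of_succ_eq hfix (by omega)).symm)
    have hgrow := card_lt_card (inter_diffusion_ssubset (j := 2 * k + 1) hC hne)
    exact lt_of_le_of_lt (ih hprev) hgrow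

end Diffusion

theorem diffusion_terminates_in_two_vc_general {V : Type*} [Fintype V] (G : SimpleGraph V) (τ : V → ℕ)
    (hτ : ∀ v, 1 ≤ τ v) (t : ℕ) (C : Finset V)
    (hC : isVertexCover G C) (hcard : C.card = t)
    (S : Finset V) :
    influence G τ S = ↑(diffusion G τ S (2 * t)) := by
  refine influence_eq_of_succ_eq (by_contra fun hne => ?_)
  have hlt := lt_card_inter_diffusion hτ hC hne
  have hle : #(C ∩ diffusion G τ S (2 * t + 1)) ≤ #C := card_le_card inter_subset_left
  omega

/-- If all thresholds are at least 1 and `t` is the minimum vertex cover number,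
then diffusion from any nonempty seed set terminates within `2t` rounds. -/
theorem diffusion_terminates_in_two_vc {V : Type*} [Fintype V] (G : SimpleGraph V) (τ : V → ℕ)
    (hτ : ∀ v, 1 ≤ τ v) (t : ℕ) (C : Finset V)
    (hC : isVertexCover G C) (hcard : C.card = t)
    (hmin : ∀ C' : Finset V, isVertexCover G C' → t ≤ C'.card)
    (S : Finset V) (hS : S.Nonempty) :
    influence G τ S = ↑(diffusion G τ S (2 * t)) :=
  diffusion_terminates_in_two_vc_general G τ hτ t C hC hcard S
end

section
/- Let X be a finite ground set, let 𝒯 be a finite family of subsets of X, and let G be the incidence bipartite graph of (X, 𝒯) with thresholds τ(x) = 1 for x ∈ X and τ(T) = |T| for T ∈ 𝒯. If 𝒮 ⊆ 𝒯 is a set cover of (X, 𝒯), i.e., ⋃_{T ∈ 𝒮} T = X, then 𝒮 (viewed as a subset of the vertices of G) is a target set of G. -/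
open scoped Classical

/-- The incidence bipartite graph of a set system `(X, 𝒯)`: its vertices are the
elements of the ground type together with the members of `𝒯`, and `x` is adjacent
to `T` iff `x ∈ T`. -/
def incGraph {α : Type*} (𝒯 : Finset (Finset α)) :
    SimpleGraph (α ⊕ {T : Finset α // T ∈ 𝒯}) where
  Adj u w :=
    (∃ (x : α) (T : {T : Finset α // T ∈ 𝒯}), u = Sum.inl x ∧ w = Sum.inr T ∧ x ∈ T.1) ∨
    (∃ (x : α) (T : {T : Finset α // T ∈ 𝒯}), w = Sum.inl x ∧ u = Sum.inr T ∧ x ∈ T.1)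
  symm := by
    constructor
    rintro u w (⟨x, T, h1, h2, h3⟩ | ⟨x, T, h1, h2, h3⟩)
    · exact Or.inr ⟨x, T, h1, h2, h3⟩
    · exact Or.inl ⟨x, T, h1, h2, h3⟩
  loopless := by
    constructor
    rintro u (⟨x, T, h1, h2, -⟩ | ⟨x, T, h1, h2, -⟩) <;> rw [h1] at h2 <;> exact Sum.inl_ne_inr h2

/-- The threshold function of the incidence graph: `1` on ground elements and
`|T|` on set vertices. -/
def incThreshold {α : Type*} (𝒯 : Finset (Finset α)) : α ⊕ {T : Finset α // T ∈ 𝒯} → ℕ :=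
  Sum.elim (fun _ => 1) (fun T => T.1.card)

section Diffusion

variable {V : Type*} [Fintype V] (G : SimpleGraph V) (τ : V → ℕ) (S : Finset V)

lemma mem_nbrs {u w : V} : w ∈ nbrs G u ↔ G.Adj u w := by
  simp [nbrs]

lemma diffusion_subset_succ (i : ℕ) : diffusion G τ S i ⊆ diffusion G τ S (i + 1) :=
  Finset.subset_union_left

lemma mem_diffusion_succ_of_card_le {u : V} {i : ℕ} (N : Finset V)
    (hN : ∀ w ∈ N, G.Adj u w ∧ w ∈ diffusion G τ S i) (hτ : τ u ≤ N.card) :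
    u ∈ diffusion G τ S (i + 1) := by
  have hsub : N ⊆ nbrs G u ∩ diffusion G τ S i := fun w hw =>
    Finset.mem_inter.mpr ⟨(mem_nbrs G).mpr (hN w hw).1, (hN w hw).2⟩
  exact Finset.mem_union_right _
    (Finset.mem_filter.mpr ⟨Finset.mem_univ _, hτ.trans (Finset.card_le_card hsub)⟩)

lemma mem_diffusion_succ_of_adj {u w : V} {i : ℕ} (hτ : τ u ≤ 1) (hadj : G.Adj u w)
    (hw : w ∈ diffusion G τ S i) : u ∈ diffusion G τ S (i + 1) :=
  mem_diffusion_succ_of_card_le G τ S {w} (by simpa using ⟨hadj, hw⟩) hτ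

lemma isTargetSet_of_forall_mem_diffusion {n : ℕ} (h : ∀ v, v ∈ diffusion G τ S n) :
    isTargetSet G τ S :=
  Set.eq_univ_of_forall fun v => ⟨n, h v⟩

end Diffusion

section Incidence

variable {α : Type*} (𝒯 : Finset (Finset α))

lemma incGraph_adj_inl_inr {x : α} {T : {T : Finset α // T ∈ 𝒯}} :
    (incGraph 𝒯).Adj (Sum.inl x) (Sum.inr T) ↔ x ∈ T.1 := by
  simp [incGraph]

variable [Fintype α] (S : Finset (α ⊕ {T : Finset α // T ∈ 𝒯}))

lemma inl_mem_diffusion_succ {x : α} {T : {T : Finset α // T ∈ 𝒯}} {i : ℕ} (hx : x ∈ T.1)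
    (hT : Sum.inr T ∈ diffusion (incGraph 𝒯) (incThreshold 𝒯) S i) :
    Sum.inl x ∈ diffusion (incGraph 𝒯) (incThreshold 𝒯) S (i + 1) :=
  mem_diffusion_succ_of_adj _ _ S le_rfl ((incGraph_adj_inl_inr 𝒯).mpr hx) hT

lemma inr_mem_diffusion_succ {T : {T : Finset α // T ∈ 𝒯}} {i : ℕ}
    (hT : ∀ x ∈ T.1, Sum.inl x ∈ diffusion (incGraph 𝒯) (incThreshold 𝒯) S i) :
    Sum.inr T ∈ diffusion (incGraph 𝒯) (incThreshold 𝒯) S (i + 1) := by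
  refine mem_diffusion_succ_of_card_le _ _ S (T.1.map Function.Embedding.inl) ?_ ?_
  · simp only [Finset.mem_map, Function.Embedding.inl_apply]
    rintro _ ⟨x, hx, rfl⟩
    exact ⟨((incGraph_adj_inl_inr 𝒯).mpr hx).symm, hT x hx⟩
  · simp [incThreshold]

end Incidence

/-- Every set cover of `(X, 𝒯)`, viewed as a set of vertices of the incidence
graph, is a target set. -/
theorem setCover_isTargetSet {α : Type*} [Fintype α] (𝒯 : Finset (Finset α))
    (𝒮 : Finset (Finset α)) (h𝒮 : 𝒮 ⊆ 𝒯)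
    (hcover : ∀ x : α, ∃ T ∈ 𝒮, x ∈ T) :
    isTargetSet (incGraph 𝒯) (incThreshold 𝒯)
      (Finset.univ.filter
        (fun v : α ⊕ {T : Finset α // T ∈ 𝒯} =>
          ∃ T : {T : Finset α // T ∈ 𝒯}, v = Sum.inr T ∧ T.1 ∈ 𝒮)) := by
  set S := Finset.univ.filter
    (fun v : α ⊕ {T : Finset α // T ∈ 𝒯} => ∃ T : {T : Finset α // T ∈ 𝒯}, v = Sum.inr T ∧ T.1 ∈ 𝒮)
  have hX : ∀ x, Sum.inl x ∈ diffusion (incGraph 𝒯) (incThreshold 𝒯) S 1 := fun x => by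
    obtain ⟨T, hT𝒮, hxT⟩ := hcover x
    exact inl_mem_diffusion_succ 𝒯 S (T := ⟨T, h𝒮 hT𝒮⟩) hxT
      (Finset.mem_filter.mpr ⟨Finset.mem_univ _, _, rfl, hT𝒮⟩)
  refine isTargetSet_of_forall_mem_diffusion _ _ _ (n := 2) ?_
  rintro (x | T)
  · exact diffusion_subset_succ _ _ _ 1 (hX x)
  · exact inr_mem_diffusion_succ 𝒯 S fun x _ => hX x
end

section
/- Let X be a finite ground set, let 𝒯 be a finite family of subsets of X such that every element of X belongs to at least one member of 𝒯, and let G be the incidence bipartite graph of (X, 𝒯) with thresholds τ(x) = 1 for x ∈ X and τ(T) = |T| for T ∈ 𝒯. Then for every target set S of G there exists a set cover 𝒮 ⊆ 𝒯 of (X, 𝒯) with |𝒮| ≤ |S|. -/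
open scoped Classical

/-- From any target set `S` of the incidence graph of `(X, 𝒯)` one can extract a
set cover `𝒮 ⊆ 𝒯` with `|𝒮| ≤ |S|`. -/
theorem targetSet_gives_setCover {α : Type*} [Fintype α] (𝒯 : Finset (Finset α))
    (hX : ∀ x : α, ∃ T ∈ 𝒯, x ∈ T)
    (S : Finset (α ⊕ {T : Finset α // T ∈ 𝒯}))
    (hS : isTargetSet (incGraph 𝒯) (incThreshold 𝒯) S) :
    ∃ 𝒮 : Finset (Finset α), 𝒮 ⊆ 𝒯 ∧ (∀ x : α, ∃ T ∈ 𝒮, x ∈ T) ∧ 𝒮.card ≤ S.card := by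
  letI : DecidableEq (α ⊕ {T : Finset α // T ∈ 𝒯}) := fun a b => Classical.propDecidable (a = b)
  choose g hg hgx using hX
  set f : (α ⊕ {T : Finset α // T ∈ 𝒯}) → Finset α := Sum.elim g (fun T => T.1) with hf
  refine ⟨S.image f, ?_, ?_, Finset.card_image_le⟩
  · intro T hT
    simp only [Finset.mem_image] at hT
    obtain ⟨u, -, rfl⟩ := hT
    cases u with
    | inl x => exact hg x
    | inr T => exact T.2
  · have hnbrs : ∀ T : {T : Finset α // T ∈ 𝒯},
        nbrs (incGraph 𝒯) (Sum.inr T) = T.1.image Sum.inl := by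
      intro T
      ext w
      simp only [nbrs, Finset.mem_filter, Finset.mem_univ, true_and, Finset.mem_image]
      constructor
      · rintro (⟨x, T', h1, h2, h3⟩ | ⟨x, T', h1, h2, h3⟩)
        · exact absurd h1 (by simp)
        · obtain rfl : T = T' := Sum.inr.inj h2
          exact ⟨x, h3, h1.symm⟩
      · rintro ⟨x, hx, rfl⟩
        exact Or.inr ⟨x, T, rfl, rfl, hx⟩
    have key : ∀ i,
        (∀ x, Sum.inl x ∈ diffusion (incGraph 𝒯) (incThreshold 𝒯) S i →
          ∃ T ∈ S.image f, x ∈ T) ∧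
        (∀ T : {T : Finset α // T ∈ 𝒯},
          Sum.inr T ∈ diffusion (incGraph 𝒯) (incThreshold 𝒯) S i →
          ∀ x ∈ T.1, ∃ T' ∈ S.image f, x ∈ T') := by
      intro i
      induction i with
      | zero =>
        constructor
        · intro x hx
          exact ⟨g x, Finset.mem_image.mpr ⟨Sum.inl x, hx, rfl⟩, hgx x⟩
        · intro T hT x hx
          exact ⟨T.1, Finset.mem_image.mpr ⟨Sum.inr T, hT, rfl⟩, hx⟩
      | succ i ih =>
        constructor
        · intro x hx
          rw [diffusion, Finset.mem_union] at hx
          rcases hx with hx | hx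
          · exact ih.1 x hx
          · simp only [Finset.mem_filter, Finset.mem_univ, true_and] at hx
            obtain ⟨w, hw⟩ := Finset.card_pos.mp (lt_of_lt_of_le Nat.one_pos hx)
            rw [Finset.mem_inter] at hw
            have hadj : (incGraph 𝒯).Adj (Sum.inl x) w := by
              have := hw.1
              simp only [nbrs, Finset.mem_filter] at this
              exact this.2
            rcases hadj with ⟨x', T', h1, h2, h3⟩ | ⟨x', T', h1, h2, h3⟩
            · obtain rfl : x = x' := Sum.inl.inj h1
              subst h2
              exact ih.2 T' hw.2 x h3
            · exact absurd h2 (by simp)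
        · intro T hT x hx
          rw [diffusion, Finset.mem_union] at hT
          rcases hT with hT | hT
          · exact ih.2 T hT x hx
          · simp only [Finset.mem_filter, Finset.mem_univ, true_and] at hT
            rw [hnbrs T] at hT
            have himg : (T.1.image (Sum.inl : α → α ⊕ {T : Finset α // T ∈ 𝒯})).card
                = T.1.card := Finset.card_image_of_injective _ Sum.inl_injective
            have hcard := le_trans himg.le hT
            have hsub : (T.1.image Sum.inl ∩ diffusion (incGraph 𝒯) (incThreshold 𝒯) S i)
                = T.1.image Sum.inl :=
              by
                apply Finset.eq_of_subset_of_card_le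
                · exact Finset.inter_subset_left
                · exact hcard
            have hmem : Sum.inl x ∈ T.1.image Sum.inl := Finset.mem_image_of_mem (Sum.inl : α → α ⊕ {T : Finset α // T ∈ 𝒯}) hx
            rw [← hsub] at hmem
            exact ih.1 x (Finset.mem_inter.mp hmem).2
    intro x
    have hx : (Sum.inl x : α ⊕ {T : Finset α // T ∈ 𝒯}) ∈
        influence (incGraph 𝒯) (incThreshold 𝒯) S := by
      rw [hS]; trivial
    obtain ⟨i, hi⟩ := hx
    exact (key i).1 x hi
end
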